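/- arXiv:math/0604496 — 2 statements merged into one kernel-verified Lean document; each statement's English description precedes it below -/
import Mathlib

section
/- If integers r, s, t, u satisfy r² + 2rs - s² = t² + 2u² and rs = tu, then with x = r⁴ - 6r²s² + s⁴ and y = 4rs(r² - s²), the sum x + y = (t² - 2u²)² is a perfect square and x² + y² = (r² + s²)⁴ is a fourth power. -/
theorem stmt6 (r s t u x y : ℤ) (h1 : r^2 + 2*r*s - s^2 = t^2 + 2*u^2) (h2 : r*s = t*u)
    (hx : x = r^4 - 6*r^2*s^2 + s^4) (hy : y = 4*r*s*(r^2 - s^2)) :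
    x + y = (t^2 - 2*u^2)^2 ∧ x^2 + y^2 = (r^2 + s^2)^4 := by
  subst hx hy
  constructor
  · nlinarith [sq_nonneg (t*u - r*s), h1, h2, sq_nonneg (t^2+2*u^2)]
  · ring
end

section
/- If rationals t, u satisfy t²u² + 2tu - 1 = t² + 2u², then with x = t⁴u⁴ - 6t²u² + 1 and y = 4tu(t²u² - 1), one has x + y = (t² - 2u²)² and x² + y² = (t²u² + 1)⁴. -/
theorem stmt16 (t u x y : ℚ) (h : t^2*u^2 + 2*t*u - 1 = t^2 + 2*u^2)
    (hx : x = t^4*u^4 - 6*t^2*u^2 + 1) (hy : y = 4*t*u*(t^2*u^2 - 1)) :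
    x + y = (t^2 - 2*u^2)^2 ∧ x^2 + y^2 = (t^2*u^2 + 1)^4 := by
  subst hx hy
  constructor
  · linear_combination (t^2*u^2 + 2*t*u - 1 + t^2 + 2*u^2 + 4*u^2 - 4*u^2) * h
  · ring
end
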